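/- Let 0 < α < 1 and let f_α be the one-sided stable density. Then for every λ ≥ 0 the one-parameter Mittag-Leffler function E_α(−λ) is the Laplace transform of the Pollard density: E_α(−λ) = (1/α) ∫_0^∞ e^{−λ t} f_α(t^{−1/α}) t^{−1/α−1} dt. In particular λ ↦ E_α(−λ) is completely monotone on (0, ∞). -/

import Mathlib

open MeasureTheory Real

/-- Riemann–Liouville fractional integral of order `ν > 0`. -/
noncomputable def RL (ν : ℝ) (f : ℝ → ℝ) (x : ℝ) : ℝ :=
  (1 / Real.Gamma ν) * ∫ u in (0:ℝ)..x, (x - u) ^ (ν - 1) * f u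

/-- Conditional stable density at scale `t`: `f_α(x|t) = t^{-1/α} f_α(x t^{-1/α})`. -/
noncomputable def condStable (α : ℝ) (f : ℝ → ℝ) (t : ℝ) (x : ℝ) : ℝ :=
  t ^ (-(1/α)) * f (x * t ^ (-(1/α)))

/-- Three-parameter Mittag-Leffler (Prabhakar) function `E^γ_{α,β}(z)`. -/
noncomputable def prabhakar (α β γ : ℝ) (z : ℝ) : ℝ :=
  (1 / Real.Gamma γ) *
    ∑' k : ℕ, Real.Gamma (γ + k) * z ^ k / ((k.factorial : ℝ) * Real.Gamma (α * k + β))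

/-- One-parameter Mittag-Leffler function `E_α(z)`. -/
noncomputable def mittagLeffler (α : ℝ) (z : ℝ) : ℝ :=
  ∑' k : ℕ, z ^ k / Real.Gamma (α * k + 1)

open Set Filter Topology
open scoped ENNReal

/-!
Expanding `exp (-λ x^{-α})` in powers of `λ` and integrating term by term against `f` reduces the
Laplace-transform identity to the negative moments `∫ x^{-αk} f(x) dx = k! / Γ(αk + 1)`. These come
from Tonelli's theorem applied to `Γ(p) x^{-p} = ∫ s^{p-1} e^{-sx} ds`, which turns the `p`-th
negative moment into `∫ s^{p-1} e^{-s^α} ds / Γ(p) = Γ(p/α) / (α Γ(p))`; the case `k = 0` is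
`∫ f = 1`, the limit of `e^{-s^α}` as `s → 0`. Term-by-term integration is justified by the ratio
test, since `Γ(x) / Γ(x + α) → 0` by log-convexity of `Γ`. The substitution `t = x^{-α}` gives the
Pollard form, and differentiating `λ ↦ ∫ e^{-λ x^{-α}} f(x) dx` under the integral sign shows that
its `n`-th derivative is `∫ (-x^{-α})^n e^{-λ x^{-α}} f(x) dx`, of sign `(-1)^n`.
-/

lemma pow_mul_exp_neg_mul_le (n : ℕ) {c y : ℝ} (hc : 0 < c) (hy : 0 ≤ y) :
    y ^ n * exp (-(c * y)) ≤ n.factorial / c ^ n := by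
  have h := Real.pow_div_factorial_le_exp _ (mul_nonneg hc.le hy) n
  rw [le_div_iff₀ (by positivity), mul_right_comm, ← mul_pow, mul_comm y c]
  calc (c * y) ^ n * exp (-(c * y)) ≤ (n.factorial * exp (c * y)) * exp (-(c * y)) := by
        gcongr; rwa [div_le_iff₀' (by positivity)] at h
    _ = n.factorial := by rw [mul_assoc, ← exp_add, add_neg_cancel, exp_zero, mul_one]

section LaplaceTransform

variable {X : Type*} [MeasurableSpace X] {μ : Measure X} {φ w : X → ℝ}

lemma integrable_neg_pow_mul_exp_neg_mul (hφ : AEMeasurable φ μ) (hφ0 : ∀ᵐ x ∂μ, 0 ≤ φ x)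
    (hw : Integrable w μ) (n : ℕ) {l : ℝ} (hl : 0 < l) :
    Integrable (fun x => (-φ x) ^ n * exp (-(l * φ x)) * w x) μ := by
  refine (hw.norm.const_mul (n.factorial / l ^ n)).mono' (by fun_prop) ?_
  filter_upwards [hφ0] with x hx
  rw [norm_mul, norm_mul, norm_pow, norm_neg, Real.norm_of_nonneg hx,
    Real.norm_of_nonneg (exp_pos _).le]
  gcongr
  exact pow_mul_exp_neg_mul_le n hl hx

lemma hasDerivAt_integral_neg_pow_mul_exp_neg_mul (hφ : AEMeasurable φ μ)
    (hφ0 : ∀ᵐ x ∂μ, 0 ≤ φ x) (hw : Integrable w μ) (n : ℕ) {l₀ : ℝ} (hl₀ : 0 < l₀) :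
    HasDerivAt (fun l => ∫ x, (-φ x) ^ n * exp (-(l * φ x)) * w x ∂μ)
      (∫ x, (-φ x) ^ (n + 1) * exp (-(l₀ * φ x)) * w x ∂μ) l₀ := by
  have hl₀2 : 0 < l₀ / 2 := half_pos hl₀
  refine (hasDerivAt_integral_of_dominated_loc_of_deriv_le (Metric.ball_mem_nhds l₀ hl₀2)
    (F := fun l x => (-φ x) ^ n * exp (-(l * φ x)) * w x)
    (F' := fun l x => (-φ x) ^ (n + 1) * exp (-(l * φ x)) * w x)
    (bound := fun x => (n + 1).factorial / (l₀ / 2) ^ (n + 1) * ‖w x‖)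
    (.of_forall fun l => by fun_prop) (integrable_neg_pow_mul_exp_neg_mul hφ hφ0 hw n hl₀)
    (by fun_prop) ?_ (hw.norm.const_mul _) ?_).2
  · filter_upwards [hφ0] with x hx l hl
    have hl2 : l₀ / 2 ≤ l := by
      rw [Metric.mem_ball, Real.dist_eq, abs_sub_lt_iff] at hl; linarith
    rw [norm_mul, norm_mul, norm_pow, norm_neg, Real.norm_of_nonneg hx,
      Real.norm_of_nonneg (exp_pos _).le]
    gcongr
    calc φ x ^ (n + 1) * exp (-(l * φ x)) ≤ φ x ^ (n + 1) * exp (-(l₀ / 2 * φ x)) := by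
          gcongr
      _ ≤ _ := pow_mul_exp_neg_mul_le (n + 1) hl₀2 hx
  · refine .of_forall fun x l _ => ?_
    exact ((((hasDerivAt_mul_const (φ x)).fun_neg.exp).const_mul ((-φ x) ^ n)).mul_const
      (w x)).congr_deriv (by ring)

lemma iteratedDeriv_integral_exp_neg_mul (hφ : AEMeasurable φ μ) (hφ0 : ∀ᵐ x ∂μ, 0 ≤ φ x)
    (hw : Integrable w μ) (n : ℕ) {l : ℝ} (hl : 0 < l) :
    iteratedDeriv n (fun l => ∫ x, exp (-(l * φ x)) * w x ∂μ) l
      = ∫ x, (-φ x) ^ n * exp (-(l * φ x)) * w x ∂μ := by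
  induction n generalizing l with
  | zero => simp
  | succ n ih =>
    have hev : iteratedDeriv n (fun l => ∫ x, exp (-(l * φ x)) * w x ∂μ)
        =ᶠ[𝓝 l] fun l => ∫ x, (-φ x) ^ n * exp (-(l * φ x)) * w x ∂μ :=
      eventually_of_mem (Ioi_mem_nhds hl) fun l' hl' => ih hl'
    rw [iteratedDeriv_succ, hev.deriv_eq]
    exact (hasDerivAt_integral_neg_pow_mul_exp_neg_mul hφ hφ0 hw n hl).deriv

lemma neg_one_pow_mul_iteratedDeriv_integral_exp_neg_mul_nonneg (hφ : AEMeasurable φ μ)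
    (hφ0 : ∀ᵐ x ∂μ, 0 ≤ φ x) (hw : Integrable w μ) (hw0 : ∀ᵐ x ∂μ, 0 ≤ w x) (n : ℕ) {l : ℝ}
    (hl : 0 < l) :
    0 ≤ (-1) ^ n * iteratedDeriv n (fun l => ∫ x, exp (-(l * φ x)) * w x ∂μ) l := by
  rw [iteratedDeriv_integral_exp_neg_mul hφ hφ0 hw n hl, ← integral_const_mul]
  refine integral_nonneg_of_ae ?_
  filter_upwards [hφ0, hw0] with x hx hwx
  have : (-1 : ℝ) ^ n * (-φ x) ^ n = φ x ^ n := by rw [← mul_pow]; simp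
  rw [← mul_assoc, ← mul_assoc, this]
  positivity

end LaplaceTransform

lemma Real.Gamma_add_one_le_Gamma_add_mul_rpow {a x : ℝ} (ha0 : 0 < a) (ha1 : a < 1)
    (hx : 0 < x) : Gamma (x + 1) ≤ Gamma (x + a) * (x + a) ^ (1 - a) := by
  have hxa : 0 < x + a := by linarith
  have h := Gamma_mul_add_mul_le_rpow_Gamma_mul_rpow_Gamma hxa (by linarith : 0 < x + a + 1)
    ha0 (by linarith : 0 < 1 - a) (by ring)
  rwa [show a * (x + a) + (1 - a) * (x + a + 1) = x + 1 by ring, Gamma_add_one hxa.ne',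
    mul_rpow hxa.le (Gamma_pos_of_pos hxa).le, mul_comm ((x + a) ^ (1 - a)), ← mul_assoc,
    ← rpow_add (Gamma_pos_of_pos hxa), add_sub_cancel, rpow_one] at h

lemma Real.tendsto_Gamma_div_Gamma_add_atTop {a : ℝ} (ha0 : 0 < a) (ha1 : a < 1) :
    Tendsto (fun x => Gamma x / Gamma (x + a)) atTop (𝓝 0) := by
  have hbound : ∀ᶠ x in atTop, Gamma x / Gamma (x + a) ≤ (x + a) ^ (1 - a) / x := by
    filter_upwards [eventually_gt_atTop 0] with x hx
    have h := Gamma_add_one_le_Gamma_add_mul_rpow ha0 ha1 hx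
    rw [Gamma_add_one hx.ne'] at h
    rw [div_le_div_iff₀ (Gamma_pos_of_pos (by linarith)) hx]
    linarith
  have hlim : Tendsto (fun x => (x + a) ^ (1 - a) / x) atTop (𝓝 0) := by
    have h1 : Tendsto (fun x : ℝ => (x + a) / x) atTop (𝓝 1) := by
      have := (tendsto_inv_atTop_zero.const_mul a).const_add 1
      rw [mul_zero, add_zero] at this
      refine this.congr' ?_
      filter_upwards [eventually_gt_atTop 0] with x hx
      field_simp
    have h2 := (tendsto_rpow_neg_atTop ha0).comp (tendsto_atTop_add_const_right _ a tendsto_id)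
    refine (by simpa using h1.mul h2 : Tendsto (fun x => (x + a) / x * (x + a) ^ (-a)) atTop
      (𝓝 0)).congr' ?_
    filter_upwards [eventually_gt_atTop 0] with x hx
    rw [sub_eq_add_neg, rpow_add (by linarith), rpow_one, div_mul_eq_mul_div]
  refine squeeze_zero' ?_ hbound hlim
  filter_upwards [eventually_gt_atTop 0] with x hx
  exact div_nonneg (Gamma_pos_of_pos hx).le (Gamma_pos_of_pos (by linarith)).le

lemma summable_pow_div_Gamma_mul_add_one {α : ℝ} (hα0 : 0 < α) (hα1 : α < 1) (l : ℝ) :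
    Summable fun k : ℕ => l ^ k / Gamma (α * k + 1) := by
  have hratio : Tendsto (fun k : ℕ => |l| * (Gamma (α * k + 1) / Gamma (α * k + 1 + α)))
      atTop (𝓝 0) := by
    simpa using ((Real.tendsto_Gamma_div_Gamma_add_atTop hα0 hα1).comp
      (tendsto_atTop_add_const_right _ 1
        (tendsto_natCast_atTop_atTop.const_mul_atTop hα0))).const_mul |l|
  refine summable_of_ratio_norm_eventually_le (r := 1 / 2) (by norm_num) ?_
  filter_upwards [hratio.eventually (eventually_le_nhds (by norm_num : (0:ℝ) < 1 / 2))]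
    with k hk
  have hΓ : 0 < Gamma (α * k + 1) := Gamma_pos_of_pos (by positivity)
  have hΓ' : 0 < Gamma (α * k + 1 + α) := Gamma_pos_of_pos (by positivity)
  calc ‖l ^ (k + 1) / Gamma (α * ↑(k + 1) + 1)‖
      = |l| * (Gamma (α * k + 1) / Gamma (α * k + 1 + α)) * ‖l ^ k / Gamma (α * k + 1)‖ := by
        rw [Nat.cast_succ, show α * (k + 1) + 1 = α * k + 1 + α by ring, norm_div, norm_div,
          norm_pow, norm_pow, Real.norm_of_nonneg hΓ.le, Real.norm_of_nonneg hΓ'.le,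
          Real.norm_eq_abs, pow_succ]
        field_simp
    _ ≤ 1 / 2 * ‖l ^ k / Gamma (α * k + 1)‖ := by gcongr

lemma integrable_and_integral_eq_of_lintegral_ofReal_eq {X : Type*} [MeasurableSpace X]
    {μ : Measure X} {g : X → ℝ} (hg : AEStronglyMeasurable g μ) (hg0 : 0 ≤ᵐ[μ] g) {c : ℝ}
    (hc : 0 ≤ c) (h : ∫⁻ x, ENNReal.ofReal (g x) ∂μ = ENNReal.ofReal c) :
    Integrable g μ ∧ ∫ x, g x ∂μ = c :=
  ⟨⟨hg, (hasFiniteIntegral_iff_ofReal hg0).2 (h ▸ ENNReal.ofReal_lt_top)⟩,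
    by rw [integral_eq_lintegral_of_nonneg_ae hg0 hg, h, ENNReal.toReal_ofReal hc]⟩

lemma lintegral_rpow_mul_exp_neg_mul {p x : ℝ} (hp : 0 < p) (hx : 0 < x) :
    ∫⁻ s in Ioi 0, ENNReal.ofReal (s ^ (p - 1)) * ENNReal.ofReal (exp (-(s * x)))
      = ENNReal.ofReal (Gamma p) * ENNReal.ofReal (x ^ (-p)) := by
  have hint : IntegrableOn (fun s : ℝ => s ^ (p - 1) * exp (-(x * s))) (Ioi 0) := by
    simpa using integrableOn_rpow_mul_exp_neg_mul_rpow (by linarith : -1 < p - 1) one_pos hx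
  have hnn : 0 ≤ᵐ[volume.restrict (Ioi 0)] fun s : ℝ => s ^ (p - 1) * exp (-(x * s)) :=
    (ae_restrict_iff' measurableSet_Ioi).2 (.of_forall fun s hs => by
      have : 0 < s := hs
      positivity)
  rw [← ENNReal.ofReal_mul (Gamma_pos_of_pos hp).le, mul_comm (Gamma p)]
  calc _ = ∫⁻ s in Ioi 0, ENNReal.ofReal (s ^ (p - 1) * exp (-(x * s))) := by
        refine setLIntegral_congr_fun measurableSet_Ioi fun s hs => ?_
        rw [← ENNReal.ofReal_mul (rpow_nonneg (le_of_lt hs) _), mul_comm s x]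
    _ = _ := by
        rw [← ofReal_integral_eq_lintegral_ofReal hint hnn,
          integral_rpow_mul_exp_neg_mul_Ioi hp hx, one_div, inv_rpow hx.le, ← rpow_neg hx.le]

lemma lintegral_rpow_mul_lintegral_exp_neg_mul {f : ℝ → ℝ} (hf : Measurable f) {p : ℝ}
    (hp : 0 < p) :
    ∫⁻ s in Ioi 0, ENNReal.ofReal (s ^ (p - 1)) *
        ∫⁻ x in Ioi 0, ENNReal.ofReal (exp (-(s * x)) * f x)
      = ENNReal.ofReal (Gamma p) * ∫⁻ x in Ioi 0, ENNReal.ofReal (x ^ (-p) * f x) := by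
  simp_rw [ENNReal.ofReal_mul (exp_pos _).le]
  calc _ = ∫⁻ s in Ioi 0, ∫⁻ x in Ioi 0, ENNReal.ofReal (s ^ (p - 1)) *
          ENNReal.ofReal (exp (-(s * x))) * ENNReal.ofReal (f x) := by
        refine lintegral_congr fun s => ?_
        rw [← lintegral_const_mul' _ _ ENNReal.ofReal_ne_top]
        simp only [mul_assoc]
    _ = ∫⁻ x in Ioi 0, (∫⁻ s in Ioi 0, ENNReal.ofReal (s ^ (p - 1)) *
          ENNReal.ofReal (exp (-(s * x)))) * ENNReal.ofReal (f x) := by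
        rw [lintegral_lintegral_swap (by fun_prop)]
        refine lintegral_congr fun x => ?_
        rw [lintegral_mul_const' _ _ ENNReal.ofReal_ne_top]
    _ = _ := by
        rw [← lintegral_const_mul' _ _ ENNReal.ofReal_ne_top]
        refine setLIntegral_congr_fun measurableSet_Ioi fun x hx => ?_
        rw [lintegral_rpow_mul_exp_neg_mul hp hx, mul_assoc,
          ENNReal.ofReal_mul (rpow_nonneg (le_of_lt hx) _)]

lemma lintegral_rpow_mul_exp_neg_rpow {α p : ℝ} (hα : 0 < α) (hp : 0 < p) :
    ∫⁻ s in Ioi 0, ENNReal.ofReal (s ^ (p - 1)) * ENNReal.ofReal (exp (-s ^ α))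
      = ENNReal.ofReal (Gamma (p / α) / α) := by
  have hnn : 0 ≤ᵐ[volume.restrict (Ioi 0)] fun s : ℝ => s ^ (p - 1) * exp (-s ^ α) :=
    (ae_restrict_iff' measurableSet_Ioi).2 (.of_forall fun s hs => by
      have : 0 < s := hs
      positivity)
  calc _ = ∫⁻ s in Ioi 0, ENNReal.ofReal (s ^ (p - 1) * exp (-s ^ α)) := by
        refine setLIntegral_congr_fun measurableSet_Ioi fun s hs => ?_
        rw [ENNReal.ofReal_mul (rpow_nonneg (le_of_lt hs) _)]
    _ = _ := by
        rw [← ofReal_integral_eq_lintegral_ofReal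
          (integrableOn_rpow_mul_exp_neg_rpow (by linarith) hα) hnn,
          integral_rpow_mul_exp_neg_rpow hα (by linarith), sub_add_cancel, one_div_mul_eq_div]

lemma norm_exp_neg_mul_mul_le {s x : ℝ} (hs : 0 ≤ s) (hx : 0 ≤ x) (y : ℝ) :
    ‖exp (-(s * x)) * y‖ ≤ ‖y‖ := by
  rw [norm_mul, Real.norm_of_nonneg (exp_pos _).le]
  exact mul_le_of_le_one_left (norm_nonneg y) (exp_le_one_iff.2 (by nlinarith))

lemma integral_exp_mul_mul_eq_tsum {X : Type*} [MeasurableSpace X] {μ : Measure X}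
    {φ w : X → ℝ} (c : ℝ) (hint : ∀ k : ℕ, Integrable (fun x => φ x ^ k * w x) μ)
    (hsum : Summable fun k : ℕ => |c| ^ k / k.factorial * ∫ x, |φ x ^ k * w x| ∂μ) :
    ∫ x, exp (c * φ x) * w x ∂μ = ∑' k : ℕ, c ^ k / k.factorial * ∫ x, φ x ^ k * w x ∂μ := by
  have hexp : ∀ x, exp (c * φ x) * w x = ∑' k : ℕ, c ^ k / k.factorial * (φ x ^ k * w x) :=
    fun x => by
      rw [exp_eq_exp_ℝ, ← ((NormedSpace.expSeries_div_hasSum_exp (c * φ x)).mul_right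
        (w x)).tsum_eq]
      exact tsum_congr fun k => by ring
  simp_rw [hexp, ← integral_const_mul]
  refine (integral_tsum_of_summable_integral_norm (fun k => (hint k).const_mul _) ?_).symm
  simpa [abs_mul, abs_div, abs_pow, integral_const_mul] using hsum

section StableDensity

variable {α : ℝ} {f : ℝ → ℝ}

lemma integrableOn_exp_neg_mul_mul (hf : Integrable f) {s : ℝ} (hs : 0 ≤ s) :
    IntegrableOn (fun x => exp (-(s * x)) * f x) (Ioi 0) := by
  have := hf.integrableOn (s := Ioi 0)
  have hexp : Continuous fun x => exp (-(s * x)) := by fun_prop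
  refine this.norm.mono' (hexp.aestronglyMeasurable.mul this.1)
    ((ae_restrict_iff' measurableSet_Ioi).2 (.of_forall
      fun x hx => norm_exp_neg_mul_mul_le hs (le_of_lt hx) _))

lemma setIntegral_Ioi_eq_one_of_laplace (hα0 : 0 < α) (hf : Integrable f)
    (hlap : ∀ s > (0:ℝ), (∫ x in Ioi (0:ℝ), exp (-(s * x)) * f x) = exp (-(s ^ α))) :
    ∫ x in Ioi 0, f x = 1 := by
  have h1 : Tendsto (fun s => ∫ x in Ioi 0, exp (-(s * x)) * f x) (𝓝[>] 0)
      (𝓝 (∫ x in Ioi 0, f x)) := by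
    have := hf.integrableOn (s := Ioi 0)
    refine tendsto_integral_filter_of_dominated_convergence (fun x => ‖f x‖) (.of_forall
      fun s => (by fun_prop : Continuous fun x => exp (-(s * x))).aestronglyMeasurable.mul this.1)
      ?_ this.norm (.of_forall fun x => ?_)
    · filter_upwards [self_mem_nhdsWithin] with s hs
      exact (ae_restrict_iff' measurableSet_Ioi).2 (.of_forall
        fun x hx => norm_exp_neg_mul_mul_le (le_of_lt hs) (le_of_lt hx) _)
    · have : Continuous fun s : ℝ => exp (-(s * x)) * f x := by fun_prop
      simpa using this.continuousWithinAt.tendsto (x := 0) (s := Ioi 0)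
  have h2 : Tendsto (fun s => ∫ x in Ioi 0, exp (-(s * x)) * f x) (𝓝[>] 0) (𝓝 1) := by
    have : ContinuousAt (fun s : ℝ => exp (-(s ^ α))) 0 :=
      (continuousAt_rpow_const 0 α (Or.inr hα0.le)).neg.rexp
    have hlim : Tendsto (fun s : ℝ => exp (-(s ^ α))) (𝓝[>] 0) (𝓝 1) := by
      simpa [zero_rpow hα0.ne'] using this.continuousWithinAt.tendsto (s := Ioi 0)
    refine hlim.congr' ?_
    filter_upwards [self_mem_nhdsWithin] with s hs
    exact (hlap s hs).symm
  exact tendsto_nhds_unique h1 h2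

lemma integral_rpow_neg_mul_of_laplace (hα0 : 0 < α) (hmeas : Measurable f)
    (hnn : ∀ x, 0 ≤ f x) (hf : Integrable f)
    (hlap : ∀ s > (0:ℝ), (∫ x in Ioi (0:ℝ), exp (-(s * x)) * f x) = exp (-(s ^ α)))
    {p : ℝ} (hp : 0 < p) :
    IntegrableOn (fun x => x ^ (-p) * f x) (Ioi 0) ∧
      ∫ x in Ioi 0, x ^ (-p) * f x = Gamma (p / α) / (α * Gamma p) := by
  have hΓ : 0 < Gamma p := Gamma_pos_of_pos hp
  have hlap' : ∀ s ∈ Ioi (0:ℝ), ∫⁻ x in Ioi 0, ENNReal.ofReal (exp (-(s * x)) * f x)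
      = ENNReal.ofReal (exp (-s ^ α)) := fun s hs => by
    rw [← ofReal_integral_eq_lintegral_ofReal (integrableOn_exp_neg_mul_mul hf (le_of_lt hs))
      (.of_forall fun x => mul_nonneg (exp_pos _).le (hnn x)), hlap s hs]
  have hmellin := lintegral_rpow_mul_lintegral_exp_neg_mul hmeas hp
  rw [setLIntegral_congr_fun measurableSet_Ioi fun s hs => by rw [hlap' s hs],
    lintegral_rpow_mul_exp_neg_rpow hα0 hp, eq_comm, ← ENNReal.eq_div_iff (by simpa using hΓ)
    ENNReal.ofReal_ne_top, ← ENNReal.ofReal_div_of_pos hΓ, div_div] at hmellin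
  refine integrable_and_integral_eq_of_lintegral_ofReal_eq (by fun_prop) ?_ (by positivity)
    hmellin
  exact (ae_restrict_iff' measurableSet_Ioi).2 (.of_forall fun x hx =>
    mul_nonneg (rpow_nonneg (le_of_lt hx) _) (hnn x))

lemma integral_rpow_neg_pow_mul_of_laplace (hα0 : 0 < α) (hmeas : Measurable f)
    (hnn : ∀ x, 0 ≤ f x) (hf : Integrable f)
    (hlap : ∀ s > (0:ℝ), (∫ x in Ioi (0:ℝ), exp (-(s * x)) * f x) = exp (-(s ^ α))) (k : ℕ) :
    IntegrableOn (fun x => (x ^ (-α)) ^ k * f x) (Ioi 0) ∧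
      ∫ x in Ioi 0, (x ^ (-α)) ^ k * f x = k.factorial / Gamma (α * k + 1) := by
  obtain rfl | ⟨m, rfl⟩ : k = 0 ∨ ∃ m, k = m + 1 := by rcases k with _ | m <;> simp
  · simpa using ⟨hf.integrableOn, setIntegral_Ioi_eq_one_of_laplace hα0 hf hlap⟩
  have hpow : EqOn (fun x : ℝ => (x ^ (-α)) ^ (m + 1) * f x)
      (fun x => x ^ (-(α * ↑(m + 1))) * f x) (Ioi 0) := fun x hx => by
    simp only
    rw [← rpow_natCast, ← rpow_mul (le_of_lt hx), neg_mul]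
  have hαk : 0 < α * ↑(m + 1) := by positivity
  obtain ⟨hint, hval⟩ := integral_rpow_neg_mul_of_laplace hα0 hmeas hnn hf hlap hαk
  refine ⟨hint.congr_fun hpow.symm measurableSet_Ioi, ?_⟩
  rw [setIntegral_congr_fun measurableSet_Ioi hpow, hval, mul_div_cancel_left₀ _ hα0.ne',
    Gamma_add_one hαk.ne', Nat.factorial_succ, Nat.cast_mul, Nat.cast_succ,
    Gamma_nat_eq_factorial]
  field_simp

lemma mittagLeffler_neg_eq_integral_of_laplace (hα0 : 0 < α) (hα1 : α < 1)
    (hmeas : Measurable f) (hnn : ∀ x, 0 ≤ f x) (hf : Integrable f)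
    (hlap : ∀ s > (0:ℝ), (∫ x in Ioi (0:ℝ), exp (-(s * x)) * f x) = exp (-(s ^ α)))
    {l : ℝ} (hl : 0 ≤ l) :
    mittagLeffler α (-l) = ∫ x in Ioi 0, exp (-(l * x ^ (-α))) * f x := by
  have hmom := integral_rpow_neg_pow_mul_of_laplace hα0 hmeas hnn hf hlap
  have habs : ∀ k : ℕ,
      ∫ x in Ioi 0, |(x ^ (-α)) ^ k * f x| = ∫ x in Ioi 0, (x ^ (-α)) ^ k * f x :=
    fun k => setIntegral_congr_fun measurableSet_Ioi fun x hx =>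
      abs_of_nonneg (mul_nonneg (pow_nonneg (rpow_nonneg (le_of_lt hx) _) _) (hnn x))
  have hsum : Summable fun k : ℕ =>
      |-l| ^ k / k.factorial * ∫ x in Ioi 0, |(x ^ (-α)) ^ k * f x| := by
    refine (summable_pow_div_Gamma_mul_add_one hα0 hα1 l).congr fun k => ?_
    rw [habs, (hmom k).2, abs_neg, abs_of_nonneg hl]
    field_simp
  simp_rw [← neg_mul, integral_exp_mul_mul_eq_tsum (-l) (fun k => (hmom k).1) hsum,
    mittagLeffler]
  refine tsum_congr fun k => ?_
  rw [(hmom k).2]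
  field_simp

end StableDensity

lemma setIntegral_Ioi_comp_rpow_neg_mul {α : ℝ} (hα : 0 < α) (g f : ℝ → ℝ) :
    ∫ x in Ioi 0, g (x ^ (-α)) * f x
      = (1 / α) * ∫ t in Ioi 0, g t * f (t ^ (-(1 / α))) * t ^ (-(1 / α) - 1) := by
  rw [← integral_comp_rpow_Ioi (fun t => g t * f (t ^ (-(1 / α))) * t ^ (-(1 / α) - 1))
    (neg_ne_zero.2 hα.ne'), abs_neg, abs_of_pos hα, ← integral_const_mul]
  refine setIntegral_congr_fun measurableSet_Ioi fun x hx => ?_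
  have hx : 0 < x := hx
  simp only [smul_eq_mul]
  have hcancel : x ^ (-α - 1) * x ^ (-α * (-(1 / α) - 1)) = 1 := by
    rw [← rpow_add hx, show -α - 1 + -α * (-(1 / α) - 1) = 0 by field_simp; ring, rpow_zero]
  rw [← rpow_mul hx.le, ← rpow_mul hx.le, show -α * -(1 / α) = 1 by field_simp, rpow_one]
  calc g (x ^ (-α)) * f x
      = 1 / α * α * (x ^ (-α - 1) * x ^ (-α * (-(1 / α) - 1))) * (g (x ^ (-α)) * f x) := by
        rw [one_div_mul_cancel hα.ne', hcancel, one_mul, one_mul]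
    _ = _ := by ring

theorem stmt_14_general (α : ℝ) (hα0 : 0 < α) (hα1 : α < 1)
    (f : ℝ → ℝ) (hmeas : Measurable f) (hnn : ∀ x, 0 ≤ f x)
    (hint : Integrable f)
    (hlap : ∀ s > (0:ℝ),
      (∫ x in Set.Ioi (0:ℝ), Real.exp (-(s * x)) * f x) = Real.exp (-(s ^ α))) :
    (∀ lam ≥ (0:ℝ),
      mittagLeffler α (-lam)
        = (1 / α) *
            ∫ t in Set.Ioi (0:ℝ),
              Real.exp (-(lam * t)) * f (t ^ (-(1/α))) * t ^ (-(1/α) - 1)) ∧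
    (∀ n : ℕ, ∀ lam > (0:ℝ),
      0 ≤ (-1 : ℝ) ^ n * iteratedDeriv n (fun l : ℝ => mittagLeffler α (-l)) lam) := by
  have hrep := fun l (hl : 0 ≤ l) =>
    mittagLeffler_neg_eq_integral_of_laplace hα0 hα1 hmeas hnn hint hlap hl
  refine ⟨fun lam hlam => ?_, fun n lam hlam => ?_⟩
  · rw [hrep lam hlam, setIntegral_Ioi_comp_rpow_neg_mul hα0 (fun t => exp (-(lam * t)))]
  · have hE : (fun l => mittagLeffler α (-l))
        =ᶠ[𝓝 lam] fun l => ∫ x in Ioi 0, exp (-(l * x ^ (-α))) * f x :=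
      eventually_of_mem (Ioi_mem_nhds hlam) fun l hl => hrep l (le_of_lt hl)
    rw [(hE.iteratedDeriv n).eq_of_nhds]
    exact neg_one_pow_mul_iteratedDeriv_integral_exp_neg_mul_nonneg (by fun_prop)
      ((ae_restrict_iff' measurableSet_Ioi).2 (.of_forall fun x hx =>
        rpow_nonneg (le_of_lt hx) _))
      hint.integrableOn (.of_forall hnn) n hlam

theorem stmt_14 (α : ℝ) (hα0 : 0 < α) (hα1 : α < 1)
    (f : ℝ → ℝ) (hmeas : Measurable f) (hnn : ∀ x, 0 ≤ f x)
    (hint : Integrable f) (hsupp : ∀ x < (0:ℝ), f x = 0)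
    (hlap : ∀ s > (0:ℝ),
      (∫ x in Set.Ioi (0:ℝ), Real.exp (-(s * x)) * f x) = Real.exp (-(s ^ α))) :
    (∀ lam ≥ (0:ℝ),
      mittagLeffler α (-lam)
        = (1 / α) *
            ∫ t in Set.Ioi (0:ℝ),
              Real.exp (-(lam * t)) * f (t ^ (-(1/α))) * t ^ (-(1/α) - 1)) ∧
    (∀ n : ℕ, ∀ lam > (0:ℝ),
      0 ≤ (-1 : ℝ) ^ n * iteratedDeriv n (fun l : ℝ => mittagLeffler α (-l)) lam) :=
  stmt_14_general α hα0 hα1 f hmeas hnn hint hlap
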